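/- The eval-readback evaluator for normal order is big-step equivalent to the balanced hybrid normal-order evaluator: for all terms M and N, no(M) = N if and only if there exists a term P with bn(M) = P and rn(P) = N; i.e., as big-step relations, rn ∘ bn = no. -/
import Mathlib


/-- Pure λ-calculus terms (de Bruijn representation). -/
inductive Tm : Type
  | var : Nat → Tm
  | lam : Tm → Tm
  | app : Tm → Tm → Tm
deriving DecidableEq

/-- Shift the free variables (those ≥ `c`) of a term up by one. -/
def lift (c : Nat) : Tm → Tm
  | .var n => if n < c then .var n else .var (n + 1)
  | .lam b => .lam (lift (c + 1) b)
  | .app m n => .app (lift c m) (lift c n)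

/-- Capture-avoiding substitution `[N/k]B` (de Bruijn). -/
def subst (N : Tm) (k : Nat) : Tm → Tm
  | .var n => if n < k then .var n else if n = k then N else .var (n - 1)
  | .lam b => .lam (subst (lift 0 N) (k + 1) b)
  | .app m n => .app (subst N k m) (subst N k n)
/-- Composition of big-step relations: `(Comp s2 s1) M N` iff
    there is `P` with `s1 M P` and `s2 P N`. -/
def Comp (s2 s1 : Tm → Tm → Prop) : Tm → Tm → Prop :=
  fun M N => ∃ P, s1 M P ∧ s2 P N

/-- The term `Ω = (λx.x x)(λx.x x)`. -/
def Omega : Tm :=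
  .app (.lam (.app (.var 0) (.var 0))) (.lam (.app (.var 0) (.var 0)))
/-- Call-by-name big-step relation. -/
inductive Bn : Tm → Tm → Prop
  | var : ∀ n, Bn (.var n) (.var n)
  | lam : ∀ B, Bn (.lam B) (.lam B)
  | beta : ∀ M N B B', Bn M (.lam B) → Bn (subst N 0 B) B' → Bn (.app M N) B'
  | neu : ∀ M N M', Bn M M' → (∀ B, M' ≠ .lam B) → Bn (.app M N) (.app M' N)
/-- Normal order big-step relation (with call-by-name as subsidiary). -/
inductive No : Tm → Tm → Prop
  | var : ∀ n, No (.var n) (.var n)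
  | lam : ∀ B B', No B B' → No (.lam B) (.lam B')
  | beta : ∀ M N B B', Bn M (.lam B) → No (subst N 0 B) B' → No (.app M N) B'
  | neu : ∀ M N M' M'' N', Bn M M' → (∀ B, M' ≠ .lam B) → No M' M'' → No N N' →
      No (.app M N) (.app M'' N')

/-- The readback `rn` of the eval-readback evaluator for normal order. -/
inductive Rn : Tm → Tm → Prop
  | var : ∀ n, Rn (.var n) (.var n)
  | lam : ∀ B P B'', Bn B P → Rn P B'' → Rn (.lam B) (.lam B'')
  | app : ∀ M N M' P N'', Rn M M' → Bn N P → Rn P N'' →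
      Rn (.app M N) (.app M' N'')

/-- Call-by-name evaluation is deterministic. -/
lemma bn_det : ∀ {M P Q : Tm}, Bn M P → Bn M Q → P = Q := by
  intro M P Q h
  induction h generalizing Q with
  | var n => intro h2; cases h2; rfl
  | lam B => intro h2; cases h2; rfl
  | beta M N B B' h1 h2 ih1 ih2 =>
    intro h3
    cases h3 with
    | beta _ _ B2 B2' g1 g2 =>
      have e := ih1 g1
      injection e with e'
      subst e'
      exact ih2 g2
    | neu _ _ M1 g1 gne =>
      exact absurd (ih1 g1).symm (gne B)
  | neu M N M' h1 hne ih =>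
    intro h3
    cases h3 with
    | beta _ _ B2 B2' g1 g2 => exact absurd (ih g1) (hne B2)
    | neu _ _ M1 g1 g1ne => rw [ih g1]

/-- Weak head normal forms. -/
inductive Wh : Tm → Prop
  | var : ∀ n, Wh (.var n)
  | lam : ∀ B, Wh (.lam B)
  | app : ∀ M N, Wh M → (∀ B, M ≠ .lam B) → Wh (.app M N)

lemma bn_wh : ∀ {M P : Tm}, Bn M P → Wh P := by
  intro M P h
  induction h with
  | var n => exact Wh.var n
  | lam B => exact Wh.lam B
  | beta M N B B' h1 h2 ih1 ih2 => exact ih2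
  | neu M N M' h1 hne ih => exact Wh.app M' N ih hne

lemma wh_bn : ∀ {P : Tm}, Wh P → Bn P P := by
  intro P h
  induction h with
  | var n => exact Bn.var n
  | lam B => exact Bn.lam B
  | app M N hM hne ih => exact Bn.neu M N M ih hne

/-- Composing call-by-name with normal order. -/
lemma bn_no : ∀ {M P N : Tm}, Bn M P → No P N → No M N := by
  intro M P N h
  induction h generalizing N with
  | var n => exact fun h => h
  | lam B => exact fun h => h
  | beta M N0 B B' h1 h2 ih1 ih2 =>
    intro hN
    exact No.beta M N0 B N h1 (ih2 hN)
  | neu M N0 M' h1 hne ih =>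
    intro hN
    cases hN with
    | beta _ _ B B' g1 g2 =>
      have := bn_det (wh_bn (bn_wh h1)) g1
      exact absurd this (hne B)
    | neu _ _ M1 M'' N' g1 g1ne g2 g3 =>
      have e : M' = M1 := bn_det (wh_bn (bn_wh h1)) g1
      subst e
      exact No.neu M N0 M' M'' N' h1 hne g2 g3

lemma no_of_rn : ∀ {P N : Tm}, Rn P N → Wh P → No P N := by
  intro P N h
  induction h with
  | var n => exact fun _ => No.var n
  | lam B Q B'' hB hQ ih =>
    intro _
    exact No.lam B B'' (bn_no hB (ih (bn_wh hB)))
  | app M N0 M' Q N'' hM hN0 hQ ihM ihQ =>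
    intro hw
    cases hw with
    | app _ _ hwM hne =>
      exact No.neu M N0 M M' N'' (wh_bn hwM) hne (ihM hwM)
        (bn_no hN0 (ihQ (bn_wh hN0)))

lemma no_forward : ∀ {M N : Tm}, No M N → ∃ P : Tm, Bn M P ∧ Rn P N := by
  intro M N h
  induction h with
  | var n => exact ⟨.var n, Bn.var n, Rn.var n⟩
  | lam B B' h ih =>
    obtain ⟨P, hP, hR⟩ := ih
    exact ⟨.lam B, Bn.lam B, Rn.lam B P B' hP hR⟩
  | beta M N0 B B' h1 h2 ih =>
    obtain ⟨P, hP, hR⟩ := ih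
    exact ⟨P, Bn.beta M N0 B P h1 hP, hR⟩
  | neu M N0 M' M'' N' h1 hne h2 h3 ih1 ih2 =>
    obtain ⟨P1, hP1, hR1⟩ := ih1
    obtain ⟨P2, hP2, hR2⟩ := ih2
    have e : P1 = M' := bn_det hP1 (wh_bn (bn_wh h1))
    subst e
    exact ⟨.app P1 N0, Bn.neu M N0 P1 h1 hne,
      Rn.app P1 N0 M'' P2 N' hR1 hP2 hR2⟩

/-- The eval-readback evaluator rn ∘ bn is big-step equivalent to
    the balanced hybrid normal-order evaluator. -/
theorem rn_bn_equiv_no :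
    (∀ M N : Tm, No M N ↔ ∃ P : Tm, Bn M P ∧ Rn P N) ∧
    Comp Rn Bn = No := by
  have key : ∀ M N : Tm, No M N ↔ ∃ P : Tm, Bn M P ∧ Rn P N := by
    intro M N
    constructor
    · exact no_forward
    · rintro ⟨P, hP, hR⟩
      exact bn_no hP (no_of_rn hR (bn_wh hP))
  refine ⟨key, ?_⟩
  funext M N
  simp only [Comp]
  exact propext ⟨fun ⟨P, h1, h2⟩ => (key M N).mpr ⟨P, h1, h2⟩,
    fun h => (key M N).mp h⟩
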